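/- arXiv:0805.0209 — 2 statements merged into one kernel-verified Lean document; each statement's English description precedes it below -/
import Mathlib

section
/- Let A be a Banach algebra and a ∈ A a compact element (L_a R_a is a compact operator on A). Then the closed two-sided ideal of A generated by a is bicompact, i.e., for all elements u, v of this ideal, the operator L_u R_v on A is compact. -/
section Defs

variable (B : Type*) [NonUnitalNormedRing B] [NormedSpace ℂ B]
  [SMulCommClass ℂ B B] [IsScalarTower ℂ B B]

/-- A closed two-sided ideal of a (not necessarily unital) complex normed algebra. -/
structure ClosedIdeal where
  carrier : Submodule ℂ B
  isClosed : IsClosed (carrier : Set B)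
  mul_mem_left : ∀ (x : B) ⦃a : B⦄, a ∈ carrier → x * a ∈ carrier
  mul_mem_right : ∀ (x : B) ⦃a : B⦄, a ∈ carrier → a * x ∈ carrier

variable {B}

/-- The two-sided multiplication map `W_b : x ↦ b x b` as a linear map. -/
def Wop (b : B) : B →ₗ[ℂ] B where
  toFun x := b * x * b
  map_add' x y := by simp [mul_add, add_mul]
  map_smul' c x := by simp [mul_smul_comm, smul_mul_assoc]

/-- An element `b` of a Banach algebra is *compact* if `x ↦ b x b` is a compact operator. -/
def IsCompactElem (b : B) : Prop := IsCompactOperator (Wop b)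

end Defs

section Instances

variable {B : Type*} [NonUnitalNormedRing B] [NormedSpace ℂ B]
  [SMulCommClass ℂ B B] [IsScalarTower ℂ B B]

namespace ClosedIdeal

instance (J : ClosedIdeal B) : Mul J.carrier :=
  ⟨fun x y => ⟨(x : B) * y, J.mul_mem_left x y.2⟩⟩

@[simp] theorem coe_mul (J : ClosedIdeal B) (x y : J.carrier) :
    ((x * y : J.carrier) : B) = (x : B) * y := rfl

instance (J : ClosedIdeal B) : NonUnitalNormedRing J.carrier :=
  { (inferInstance : NormedAddCommGroup J.carrier) with
    mul := (· * ·)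
    mul_assoc := fun x y z => Subtype.ext (mul_assoc (x : B) y z)
    left_distrib := fun x y z => Subtype.ext (mul_add (x : B) y z)
    right_distrib := fun x y z => Subtype.ext (add_mul (x : B) y z)
    zero_mul := fun x => Subtype.ext (zero_mul (x : B))
    mul_zero := fun x => Subtype.ext (mul_zero (x : B))
    norm_mul_le := fun x y => norm_mul_le (x : B) y }

instance (J : ClosedIdeal B) : SMulCommClass ℂ J.carrier J.carrier :=
  ⟨fun c x y => Subtype.ext (mul_smul_comm c (x : B) y).symm⟩

instance (J : ClosedIdeal B) : IsScalarTower ℂ J.carrier J.carrier :=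
  ⟨fun c x y => Subtype.ext (smul_mul_assoc c (x : B) y)⟩

instance (J : ClosedIdeal B) [CompleteSpace B] : CompleteSpace J.carrier :=
  J.isClosed.completeSpace_coe

end ClosedIdeal

end Instances

section QuotInstances

variable {B : Type*} [NonUnitalNormedRing B] [NormedSpace ℂ B]
  [SMulCommClass ℂ B B] [IsScalarTower ℂ B B] (J : ClosedIdeal B)

instance : Mul (B ⧸ J.carrier) :=
  ⟨Quotient.map₂ (· * ·) (by
    intro a a' ha b b' hb
    replace ha : a - a' ∈ J.carrier := (Submodule.quotientRel_def _).mp ha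
    replace hb : b - b' ∈ J.carrier := (Submodule.quotientRel_def _).mp hb
    refine (Submodule.quotientRel_def _).mpr ?_
    have h : a * b - a' * b' = a * (b - b') + (a - a') * b' := by
      rw [mul_sub, sub_mul]; abel
    rw [h]
    exact J.carrier.add_mem (J.mul_mem_left a hb) (J.mul_mem_right b' ha))⟩

@[simp] theorem ClosedIdeal.mk_mul (a b : B) :
    (Submodule.Quotient.mk (a * b) : B ⧸ J.carrier) =
      Submodule.Quotient.mk a * Submodule.Quotient.mk b := rfl

end QuotInstances

section QuotRing

variable {B : Type*} [NonUnitalNormedRing B] [NormedSpace ℂ B]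
  [SMulCommClass ℂ B B] [IsScalarTower ℂ B B] (J : ClosedIdeal B)

noncomputable instance : NormedAddCommGroup (B ⧸ J.carrier) :=
  have : IsClosed ((J.carrier : Submodule ℂ B) : Set B) := J.isClosed
  Submodule.Quotient.normedAddCommGroup J.carrier

noncomputable instance : NonUnitalNormedRing (B ⧸ J.carrier) :=
  { (inferInstance : NormedAddCommGroup (B ⧸ J.carrier)) with
    mul := (· * ·)
    mul_assoc := fun q1 q2 q3 => Quotient.inductionOn₃ q1 q2 q3 fun a b c =>
      congrArg Submodule.Quotient.mk (mul_assoc a b c)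
    left_distrib := fun q1 q2 q3 => Quotient.inductionOn₃ q1 q2 q3 fun a b c =>
      congrArg Submodule.Quotient.mk (mul_add a b c)
    right_distrib := fun q1 q2 q3 => Quotient.inductionOn₃ q1 q2 q3 fun a b c =>
      congrArg Submodule.Quotient.mk (add_mul a b c)
    zero_mul := fun q => Quotient.inductionOn q fun a =>
      congrArg Submodule.Quotient.mk (zero_mul a)
    mul_zero := fun q => Quotient.inductionOn q fun a =>
      congrArg Submodule.Quotient.mk (mul_zero a)
    norm_mul_le := fun q1 q2 => by
      have key : ∀ ε : ℝ, 0 < ε → ‖q1 * q2‖ ≤ (‖q1‖ + ε) * (‖q2‖ + ε) := by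
        intro ε hε
        obtain ⟨a, rfl, ha⟩ := Submodule.Quotient.norm_mk_lt q1 hε
        obtain ⟨b, rfl, hb⟩ := Submodule.Quotient.norm_mk_lt q2 hε
        calc ‖(Submodule.Quotient.mk a : B ⧸ J.carrier) * Submodule.Quotient.mk b‖
            = ‖(Submodule.Quotient.mk (a * b) : B ⧸ J.carrier)‖ := by
              rw [ClosedIdeal.mk_mul]
          _ ≤ ‖a * b‖ := Submodule.Quotient.norm_mk_le _ _
          _ ≤ ‖a‖ * ‖b‖ := norm_mul_le a b
          _ ≤ (‖(Submodule.Quotient.mk a : B ⧸ J.carrier)‖ + ε) *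
                (‖(Submodule.Quotient.mk b : B ⧸ J.carrier)‖ + ε) := by
              apply mul_le_mul ha.le hb.le (norm_nonneg b)
              positivity
      have cont : Filter.Tendsto (fun ε : ℝ => (‖q1‖ + ε) * (‖q2‖ + ε))
          (nhdsWithin 0 (Set.Ioi 0)) (nhds (‖q1‖ * ‖q2‖)) := by
        have h0 : Filter.Tendsto (fun ε : ℝ => (‖q1‖ + ε) * (‖q2‖ + ε))
            (nhds 0) (nhds ((‖q1‖ + 0) * (‖q2‖ + 0))) :=
          Continuous.tendsto (by continuity) 0
        simpa using h0.mono_left nhdsWithin_le_nhds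
      exact ge_of_tendsto cont
        (Filter.eventually_of_mem self_mem_nhdsWithin fun ε hε => key ε hε) }

noncomputable instance : SMulCommClass ℂ (B ⧸ J.carrier) (B ⧸ J.carrier) :=
  ⟨fun c q1 q2 => Quotient.inductionOn₂ q1 q2 fun a b =>
    congrArg Submodule.Quotient.mk (mul_smul_comm c a b).symm⟩

noncomputable instance : IsScalarTower ℂ (B ⧸ J.carrier) (B ⧸ J.carrier) :=
  ⟨fun c q1 q2 => Quotient.inductionOn₂ q1 q2 fun a b =>
    congrArg Submodule.Quotient.mk (smul_mul_assoc c a b)⟩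

end QuotRing

section Hypo

variable (B : Type*) [NonUnitalNormedRing B] [NormedSpace ℂ B]
  [SMulCommClass ℂ B B] [IsScalarTower ℂ B B]

/-- A Banach algebra is *hypocompact* if every nonzero quotient by a closed
two-sided ideal contains a nonzero compact element. -/
def IsHypocompact : Prop :=
  ∀ J : ClosedIdeal B, J.carrier ≠ ⊤ →
    ∃ q : B ⧸ J.carrier, q ≠ 0 ∧ IsCompactElem q

end Hypo

/-- The closed two-sided ideal of a (unital) Banach algebra generated by `a`:
the closure of the linear span of `{u a v : u, v ∈ A}`. -/
noncomputable def closedIdealGen {A : Type*} [NormedRing A] [NormedAlgebra ℂ A]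
    (a : A) : Submodule ℂ A :=
  (Submodule.span ℂ {x | ∃ u v : A, x = u * a * v}).topologicalClosure

/-! Compact operators form a closed subspace and `(u, v) ↦ L_u R_v` is continuous and bilinear,
so it suffices to take `u = p a q` and `v = r a s`; then `L_u R_v = L_p R_s ∘ W_a ∘ L_q R_r`. -/

theorem ContinuousLinearMap.map_mem_of_mem_closure_span {R E G : Type*} [Semiring R]
    [TopologicalSpace E] [AddCommMonoid E] [Module R E] [ContinuousAdd E]
    [ContinuousConstSMul R E] [TopologicalSpace G] [AddCommMonoid G] [Module R G]
    (f : E →L[R] G) {C : Submodule R G} (hC : IsClosed (C : Set G)) {S : Set E}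
    (hS : ∀ s ∈ S, f s ∈ C) {u : E} (hu : u ∈ (Submodule.span R S).topologicalClosure) :
    f u ∈ C :=
  (Submodule.span R S).topologicalClosure_minimal (t := C.comap (f : E →ₗ[R] G))
    (Submodule.span_le.2 hS) (hC.preimage f.continuous) hu

theorem ContinuousLinearMap.map_mem_of_mem_closure_span₂ {𝕜 E F G : Type*}
    [NontriviallyNormedField 𝕜] [SeminormedAddCommGroup E] [NormedSpace 𝕜 E]
    [SeminormedAddCommGroup F] [NormedSpace 𝕜 F] [SeminormedAddCommGroup G] [NormedSpace 𝕜 G]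
    (Φ : E →L[𝕜] F →L[𝕜] G) {C : Submodule 𝕜 G} (hC : IsClosed (C : Set G))
    {S : Set E} {T : Set F} (h : ∀ s ∈ S, ∀ t ∈ T, Φ s t ∈ C) {u : E} {v : F}
    (hu : u ∈ (Submodule.span 𝕜 S).topologicalClosure)
    (hv : v ∈ (Submodule.span 𝕜 T).topologicalClosure) : Φ u v ∈ C :=
  (Φ.flip v).map_mem_of_mem_closure_span hC
    (fun s hs => (Φ s).map_mem_of_mem_closure_span hC (h s hs) hv) hu

theorem IsCompactElem.isCompactOperator_mul_mul {B : Type*} [NonUnitalNormedRing B]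
    [NormedSpace ℂ B] [SMulCommClass ℂ B B] [IsScalarTower ℂ B B] {a : B}
    (ha : IsCompactElem a) (p q r s : B) :
    IsCompactOperator fun x : B => p * a * q * x * (r * a * s) := by
  have hfactor : (fun x : B => p * a * q * x * (r * a * s)) =
      ContinuousLinearMap.mulLeftRight ℂ B p s ∘ Wop a ∘
        ContinuousLinearMap.mulLeftRight ℂ B q r := by
    funext x
    simp only [Function.comp_apply, ContinuousLinearMap.mulLeftRight_apply, Wop,
      LinearMap.coe_mk, AddHom.coe_mk, mul_assoc]
  rw [hfactor]
  exact (ha.comp_clm _).clm_comp _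

/-- if `a` is a compact element of a Banach algebra `A`, then the
closed ideal of `A` generated by `a` is bicompact: `L_u R_v` is a compact
operator for all `u, v` in this ideal. -/
theorem closedIdealGen_bicompact {A : Type*} [NormedRing A] [NormedAlgebra ℂ A]
    [CompleteSpace A] (a : A) (ha : IsCompactElem a) :
    ∀ u ∈ closedIdealGen a, ∀ v ∈ closedIdealGen a,
      IsCompactOperator (fun x : A => u * x * v) := by
  intro u hu v hv
  refine (ContinuousLinearMap.mulLeftRight ℂ A).map_mem_of_mem_closure_span₂
    (C := compactOperator (RingHom.id ℂ) A A) isClosed_setOfPred_isCompactOperator ?_ hu hv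
  rintro _ ⟨p, q, rfl⟩ _ ⟨r, s, rfl⟩
  exact ha.isCompactOperator_mul_mul p q r s
end

section
/- Let A be a Banach algebra, J a closed bicompact ideal, and M a bounded subset of A, and let ‖M/J‖ denote the norm of the image of M in A/J. Then for every ε > 0, ‖L_a R_b‖_e ≤ (‖M/J‖ + ε)(3‖M‖ + ε) for all a, b ∈ M; consequently the essential norm satisfies ‖L_M R_M‖_e ≤ 3‖M/J‖‖M‖ and ρ_e(L_M R_M) ≤ ρ(M/J) ρ(M). -/
open scoped Pointwise
open Filter

variable {A : Type*} [NormedRing A] [NormedAlgebra ℂ A]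

/-- The norm of a bounded set: supremum of the norms of its elements. -/
noncomputable def setNorm (M : Set A) : ℝ := sSup ((fun a => ‖a‖) '' M)

/-- The joint spectral radius `ρ(M) = inf_n ‖M^n‖^{1/n}`. -/
noncomputable def jsr (M : Set A) : ℝ :=
  ⨅ n : ℕ+, (setNorm (M ^ (n : ℕ))) ^ ((n : ℝ)⁻¹)

/-- The quotient norm of `a` modulo a closed ideal `J`: `‖a/J‖ = dist(a, J)`. -/
noncomputable def qNorm (J : ClosedIdeal A) (a : A) : ℝ :=
  Metric.infDist a (J.carrier : Set A)

/-- The norm `‖M/J‖` of the image of `M` in `A/J`. -/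
noncomputable def qSetNorm (J : ClosedIdeal A) (M : Set A) : ℝ :=
  sSup ((fun a => qNorm J a) '' M)

/-- The joint spectral radius `ρ(M/J)` of the image of `M` in `A/J`. -/
noncomputable def qjsr (J : ClosedIdeal A) (M : Set A) : ℝ :=
  ⨅ n : ℕ+, (qSetNorm J (M ^ (n : ℕ))) ^ ((n : ℝ)⁻¹)

/-- Left multiplication operator `L_a : x ↦ a x`. -/
noncomputable def Lmul (a : A) : A →L[ℂ] A := ContinuousLinearMap.mul ℂ A a

/-- Right multiplication operator `R_b : x ↦ x b`. -/
noncomputable def Rmul (b : A) : A →L[ℂ] A := (ContinuousLinearMap.mul ℂ A).flip b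

/-- The family `L_M R_M = {L_a R_b : a, b ∈ M}`. -/
noncomputable def LR (M N : Set A) : Set (A →L[ℂ] A) :=
  {T | ∃ a ∈ M, ∃ b ∈ N, T = (Lmul a).comp (Rmul b)}

/-- The essential norm of an operator: its distance to the compact operators. -/
noncomputable def essNorm (T : A →L[ℂ] A) : ℝ :=
  Metric.infDist T {S : A →L[ℂ] A | IsCompactOperator S}

/-- `ρ_e(N) = limsup_n (sup {‖T‖_e : T ∈ N^n})^{1/n}`. -/
noncomputable def rhoE (N : Set (A →L[ℂ] A)) : ℝ :=
  limsup (fun n : ℕ => (sSup (essNorm '' (N ^ n))) ^ ((n : ℝ)⁻¹)) atTop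

open Topology
set_option linter.unusedSectionVars false

lemma setNorm_nonneg (M : Set A) : 0 ≤ setNorm M :=
  Real.sSup_nonneg (by rintro x ⟨a, _, rfl⟩; exact norm_nonneg a)

lemma setNorm_le {M : Set A} {C : ℝ} (h0 : 0 ≤ C) (h : ∀ a ∈ M, ‖a‖ ≤ C) :
    setNorm M ≤ C :=
  Real.sSup_le (by rintro x ⟨a, ha, rfl⟩; exact h a ha) h0

lemma norm_le_setNorm {M : Set A} (hM : Bornology.IsBounded M) {a : A} (ha : a ∈ M) :
    ‖a‖ ≤ setNorm M := by
  obtain ⟨R, hR⟩ := hM.exists_norm_le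
  exact le_csSup ⟨R, by rintro x ⟨b, hb, rfl⟩; exact hR b hb⟩ ⟨a, ha, rfl⟩

lemma qNorm_nonneg (J : ClosedIdeal A) (a : A) : 0 ≤ qNorm J a :=
  Metric.infDist_nonneg

lemma qNorm_le_norm (J : ClosedIdeal A) (a : A) : qNorm J a ≤ ‖a‖ := by
  simpa [qNorm] using Metric.infDist_le_dist_of_mem (x := a) (y := (0 : A))
    (J.carrier.zero_mem)

lemma qSetNorm_nonneg (J : ClosedIdeal A) (M : Set A) : 0 ≤ qSetNorm J M :=
  Real.sSup_nonneg (by rintro x ⟨a, _, rfl⟩; exact qNorm_nonneg J a)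

lemma qSetNorm_le {J : ClosedIdeal A} {M : Set A} {C : ℝ} (h0 : 0 ≤ C)
    (h : ∀ a ∈ M, qNorm J a ≤ C) : qSetNorm J M ≤ C :=
  Real.sSup_le (by rintro x ⟨a, ha, rfl⟩; exact h a ha) h0

lemma qNorm_le_qSetNorm {J : ClosedIdeal A} {M : Set A} (hM : Bornology.IsBounded M)
    {a : A} (ha : a ∈ M) : qNorm J a ≤ qSetNorm J M := by
  obtain ⟨R, hR⟩ := hM.exists_norm_le
  refine le_csSup ⟨R, ?_⟩ ⟨a, ha, rfl⟩
  rintro x ⟨b, hb, rfl⟩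
  exact (qNorm_le_norm J b).trans (hR b hb)

lemma qSetNorm_le_setNorm (J : ClosedIdeal A) {M : Set A} (hM : Bornology.IsBounded M) :
    qSetNorm J M ≤ setNorm M :=
  qSetNorm_le (setNorm_nonneg M) fun a ha =>
    (qNorm_le_norm J a).trans (norm_le_setNorm hM ha)

lemma le_mul_of_forall_eps {x c d : ℝ} (hc : 0 ≤ c) (hd : 0 ≤ d)
    (h : ∀ ε : ℝ, 0 < ε → x ≤ (c + ε) * (d + ε)) : x ≤ c * d := by
  refine le_of_forall_pos_le_add fun δ hδ => ?_
  have hcd : 0 < c + d + 1 := by linarith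
  set ε := min 1 (δ / (c + d + 1)) with hεdef
  have hε0 : 0 < ε := lt_min one_pos (div_pos hδ hcd)
  have hε1 : ε ≤ 1 := min_le_left _ _
  have h2 : ε * (c + d + 1) ≤ δ := (le_div_iff₀ hcd).mp (min_le_right _ _)
  have h3 := h ε hε0
  nlinarith

lemma qNorm_mul_le (J : ClosedIdeal A) (x y : A) :
    qNorm J (x * y) ≤ qNorm J x * qNorm J y := by
  have key : ∀ ε > (0:ℝ), qNorm J (x * y) ≤ (qNorm J x + ε) * (qNorm J y + ε) := by
    intro ε hε
    obtain ⟨j, hj, hjx⟩ := (Metric.infDist_lt_iff ⟨0, J.carrier.zero_mem⟩).mp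
      (show qNorm J x < qNorm J x + ε by linarith)
    obtain ⟨j', hj', hjy⟩ := (Metric.infDist_lt_iff ⟨0, J.carrier.zero_mem⟩).mp
      (show qNorm J y < qNorm J y + ε by linarith)
    have hw : j * y + x * j' - j * j' ∈ J.carrier :=
      J.carrier.sub_mem (J.carrier.add_mem (J.mul_mem_right y hj) (J.mul_mem_left x hj'))
        (J.mul_mem_left j hj')
    have heq : x * y - (j * y + x * j' - j * j') = (x - j) * (y - j') := by
      noncomm_ring
    calc qNorm J (x * y) ≤ dist (x * y) (j * y + x * j' - j * j') :=
          Metric.infDist_le_dist_of_mem hw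
      _ = ‖(x - j) * (y - j')‖ := by rw [dist_eq_norm, heq]
      _ ≤ ‖x - j‖ * ‖y - j'‖ := norm_mul_le _ _
      _ ≤ (qNorm J x + ε) * (qNorm J y + ε) := by
          rw [dist_eq_norm] at hjx hjy
          have := qNorm_nonneg J x
          exact mul_le_mul hjx.le hjy.le (norm_nonneg _) (by linarith)
  exact le_mul_of_forall_eps (qNorm_nonneg J x) (qNorm_nonneg J y) key

lemma isBoundedPowSet {M : Set A} (hM : Bornology.IsBounded M) {n : ℕ} (hn : 1 ≤ n) :
    Bornology.IsBounded (M ^ n) := by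
  induction n with
  | zero => omega
  | succ k ih =>
    rcases Nat.eq_or_lt_of_le hn with h1 | h2
    · rw [← h1]; simpa using hM
    · rw [pow_succ]
      have h1 := ih (by omega)
      obtain ⟨R, hR⟩ := h1.exists_norm_le
      obtain ⟨S, hS⟩ := hM.exists_norm_le
      rw [isBounded_iff_forall_norm_le]
      refine ⟨(max R 0) * (max S 0), ?_⟩
      rintro x ⟨a, ha, b, hb, rfl⟩
      exact (norm_mul_le a b).trans (mul_le_mul ((hR a ha).trans (le_max_left _ _))
        ((hS b hb).trans (le_max_left _ _)) (norm_nonneg b) (le_max_right _ _))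

lemma setNorm_mul_le {M N : Set A} (hM : Bornology.IsBounded M)
    (hN : Bornology.IsBounded N) : setNorm (M * N) ≤ setNorm M * setNorm N := by
  refine setNorm_le (mul_nonneg (setNorm_nonneg M) (setNorm_nonneg N)) ?_
  rintro x ⟨a, ha, b, hb, rfl⟩
  exact (norm_mul_le a b).trans
    (mul_le_mul (norm_le_setNorm hM ha) (norm_le_setNorm hN hb) (norm_nonneg b)
      (setNorm_nonneg M))

lemma qSetNorm_mul_le (J : ClosedIdeal A) {M N : Set A} (hM : Bornology.IsBounded M)
    (hN : Bornology.IsBounded N) : qSetNorm J (M * N) ≤ qSetNorm J M * qSetNorm J N := by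
  refine qSetNorm_le (mul_nonneg (qSetNorm_nonneg J M) (qSetNorm_nonneg J N)) ?_
  rintro x ⟨a, ha, b, hb, rfl⟩
  exact (qNorm_mul_le J a b).trans
    (mul_le_mul (qNorm_le_qSetNorm hM ha) (qNorm_le_qSetNorm hN hb) (qNorm_nonneg J b)
      (qSetNorm_nonneg J M))

lemma norm_Lmul_le (a : A) : ‖Lmul a‖ ≤ ‖a‖ :=
  ContinuousLinearMap.opNorm_mul_apply_le ℂ A a

lemma norm_Rmul_le (b : A) : ‖Rmul b‖ ≤ ‖b‖ := by
  refine ContinuousLinearMap.opNorm_le_bound _ (norm_nonneg b) fun x => ?_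
  simpa [Rmul, mul_comm] using norm_mul_le x b

/-- The key pointwise estimate. -/
lemma essNorm_key {J : ClosedIdeal A}
    (hJ : ∀ u ∈ J.carrier, ∀ v ∈ J.carrier, IsCompactOperator (fun x : A => u * x * v))
    {M : Set A} (hM : Bornology.IsBounded M) {ε : ℝ} (hε : 0 < ε) {a b : A}
    (ha : a ∈ M) (hb : b ∈ M) :
    essNorm ((Lmul a).comp (Rmul b)) ≤ (qSetNorm J M + ε) * (3 * setNorm M + ε) := by
  set q := qSetNorm J M with hq
  set m := setNorm M with hm
  have hq0 : 0 ≤ q := qSetNorm_nonneg J M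
  have hm0 : 0 ≤ m := setNorm_nonneg M
  have hqm : q ≤ m := qSetNorm_le_setNorm J hM
  obtain ⟨u, hu, hau⟩ := (Metric.infDist_lt_iff ⟨0, J.carrier.zero_mem⟩).mp
    (show qNorm J a < q + ε from lt_of_le_of_lt (qNorm_le_qSetNorm hM ha) (by linarith))
  obtain ⟨v, hv, hbv⟩ := (Metric.infDist_lt_iff ⟨0, J.carrier.zero_mem⟩).mp
    (show qNorm J b < q + ε from lt_of_le_of_lt (qNorm_le_qSetNorm hM hb) (by linarith))
  rw [dist_eq_norm] at hau hbv
  have hK : IsCompactOperator ((Lmul u).comp (Rmul v) : A →L[ℂ] A) := by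
    have := hJ u hu v hv
    have he : (fun x : A => u * x * v) = ⇑((Lmul u).comp (Rmul v)) := by
      funext x
      simp [Lmul, Rmul, mul_assoc]
    rwa [he] at this
  have h1 : essNorm ((Lmul a).comp (Rmul b)) ≤
      ‖(Lmul a).comp (Rmul b) - (Lmul u).comp (Rmul v)‖ := by
    have := Metric.infDist_le_dist_of_mem
      (x := (Lmul a).comp (Rmul b))
      (show (Lmul u).comp (Rmul v) ∈ {S : A →L[ℂ] A | IsCompactOperator S} from hK)
    rwa [dist_eq_norm] at this
  have hdecomp : (Lmul a).comp (Rmul b) - (Lmul u).comp (Rmul v) =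
      (Lmul (a - u)).comp (Rmul b) + (Lmul u).comp (Rmul (b - v)) := by
    ext x
    simp only [ContinuousLinearMap.sub_apply, ContinuousLinearMap.add_apply,
      ContinuousLinearMap.comp_apply, Lmul, Rmul, ContinuousLinearMap.flip_apply,
      ContinuousLinearMap.mul_apply']
    noncomm_ring
  have h2 : ‖(Lmul (a - u)).comp (Rmul b) + (Lmul u).comp (Rmul (b - v))‖ ≤
      ‖a - u‖ * ‖b‖ + ‖u‖ * ‖b - v‖ :=
    (norm_add_le _ _).trans (add_le_add
      ((ContinuousLinearMap.opNorm_comp_le _ _).trans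
        (mul_le_mul (norm_Lmul_le _) (norm_Rmul_le _) (norm_nonneg _) (norm_nonneg _)))
      ((ContinuousLinearMap.opNorm_comp_le _ _).trans
        (mul_le_mul (norm_Lmul_le _) (norm_Rmul_le _) (norm_nonneg _) (norm_nonneg _))))
  have hbm : ‖b‖ ≤ m := norm_le_setNorm hM hb
  have ham : ‖a‖ ≤ m := norm_le_setNorm hM ha
  have hum : ‖u‖ ≤ m + (q + ε) := by
    calc ‖u‖ = ‖a - (a - u)‖ := by rw [sub_sub_cancel]
      _ ≤ ‖a‖ + ‖a - u‖ := norm_sub_le _ _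
      _ ≤ m + (q + ε) := add_le_add ham hau.le
  calc essNorm ((Lmul a).comp (Rmul b)) ≤ ‖a - u‖ * ‖b‖ + ‖u‖ * ‖b - v‖ := by
        rw [hdecomp] at h1; exact h1.trans h2
    _ ≤ (q + ε) * m + (m + (q + ε)) * (q + ε) := by
        have := norm_nonneg (b - v)
        have := norm_nonneg b
        have := norm_nonneg u
        have := norm_nonneg (a - u)
        nlinarith [hau, hbv, hbm]
    _ ≤ (q + ε) * (3 * m + ε) := by nlinarith

lemma LR_pow_subset (M : Set A) {n : ℕ} (hn : 1 ≤ n) :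
    (LR M M) ^ n ⊆ LR (M ^ n) (M ^ n) := by
  induction n with
  | zero => omega
  | succ k ih =>
    rcases Nat.eq_or_lt_of_le hn with h1 | h2
    · rw [← h1]; simp [pow_one]
    · have hk : 1 ≤ k := by omega
      rw [pow_succ]
      rintro T ⟨S, hS, S', hS', rfl⟩
      obtain ⟨u, hu, v, hv, rfl⟩ := ih hk hS
      obtain ⟨a, ha, b, hb, rfl⟩ := hS'
      refine ⟨u * a, ?_, b * v, ?_, ?_⟩
      · rw [pow_succ]; exact Set.mul_mem_mul hu ha
      · rw [pow_succ']; exact Set.mul_mem_mul hb hv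
      · ext x
        simp only [ContinuousLinearMap.mul_apply, ContinuousLinearMap.comp_apply,
          Lmul, Rmul, ContinuousLinearMap.flip_apply, ContinuousLinearMap.mul_apply']
        noncomm_ring

lemma essNorm_nonneg (T : A →L[ℂ] A) : 0 ≤ essNorm T := Metric.infDist_nonneg

lemma sSup_essNorm_LR_le (J : ClosedIdeal A)
    (hJ : ∀ u ∈ J.carrier, ∀ v ∈ J.carrier, IsCompactOperator (fun x : A => u * x * v))
    {M : Set A} (hM : Bornology.IsBounded M) :
    sSup (essNorm '' LR M M) ≤ 3 * qSetNorm J M * setNorm M := by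
  have h3 : (0:ℝ) ≤ 3 * qSetNorm J M * setNorm M := by
    have := qSetNorm_nonneg J M; have := setNorm_nonneg M; positivity
  refine Real.sSup_le ?_ h3
  rintro x ⟨T, ⟨a, ha, b, hb, rfl⟩, rfl⟩
  have key : ∀ ε : ℝ, 0 < ε → essNorm ((Lmul a).comp (Rmul b)) ≤
      (qSetNorm J M + ε) * (3 * setNorm M + ε) :=
    fun ε hε => essNorm_key hJ hM hε ha hb
  have := le_mul_of_forall_eps (qSetNorm_nonneg J M)
    (by have := setNorm_nonneg M; positivity) key
  calc essNorm ((Lmul a).comp (Rmul b)) ≤ qSetNorm J M * (3 * setNorm M) := this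
    _ = 3 * qSetNorm J M * setNorm M := by ring

open Real in
/-- Fekete-type bound: `limsup sₙ^{1/n} ≤ max (c_k^{1/k}) ε` for `s ≤ 3c`, `c` submultiplicative. -/
lemma limsup_root_le_aux {c : ℕ → ℝ} (hc0 : ∀ n, 1 ≤ n → 0 ≤ c n)
    (hsub : ∀ j k, 1 ≤ j → 1 ≤ k → c (j + k) ≤ c j * c k)
    {s : ℕ → ℝ} (hs0 : ∀ n, 0 ≤ s n) (hs : ∀ n, 1 ≤ n → s n ≤ 3 * c n)
    {k : ℕ} (hk : 1 ≤ k) {ε : ℝ} (hε : 0 < ε) (hε1 : ε ≤ 1) :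
    limsup (fun n : ℕ => (s n) ^ ((n : ℝ)⁻¹)) atTop ≤ max ((c k) ^ ((k : ℝ)⁻¹)) ε := by
  classical
  set d : ℕ → ℝ := fun n => if n = 0 then 1 else max (c n) (ε ^ n) with hd
  have hdpos : ∀ n, 0 < d n := by
    intro n
    by_cases h : n = 0
    · simp [hd, h]
    · simp only [hd, h, if_false]
      exact lt_max_of_lt_right (pow_pos hε n)
  have hcd : ∀ n, 1 ≤ n → c n ≤ d n := by
    intro n hn
    simp only [hd, Nat.one_le_iff_ne_zero.mp hn, if_false]
    exact le_max_left _ _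
  set u : ℕ → ℝ := fun n => Real.log (d n) with hu
  have husub : Subadditive u := by
    intro j l
    rcases Nat.eq_zero_or_pos j with hj | hj
    · simp [hu, hj, hd]
    rcases Nat.eq_zero_or_pos l with hl | hl
    · simp [hu, hl, hd]
    have hdm : d (j + l) ≤ d j * d l := by
      simp only [hd, Nat.pos_iff_ne_zero.mp hj, Nat.pos_iff_ne_zero.mp hl,
        Nat.add_eq_zero, if_false, and_false, ite_false]
      refine max_le ?_ ?_
      · exact (hsub j l hj hl).trans (mul_le_mul (le_max_left _ _) (le_max_left _ _)
          (hc0 l hl) (le_max_of_le_left (hc0 j hj)))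
      · rw [pow_add]
        exact mul_le_mul (le_max_right _ _) (le_max_right _ _)
          (pow_nonneg hε.le l) (le_max_of_le_left (hc0 j hj))
    calc u (j + l) ≤ Real.log (d j * d l) :=
          Real.log_le_log (hdpos _) hdm
      _ = u j + u l := Real.log_mul (hdpos j).ne' (hdpos l).ne'
  have hbdd : BddBelow (Set.range fun n : ℕ => u n / n) := by
    refine ⟨Real.log ε, ?_⟩
    rintro x ⟨n, rfl⟩
    rcases Nat.eq_zero_or_pos n with hn | hn
    · simp [hn]
      exact Real.log_nonpos hε.le hε1
    have h1 : ε ^ n ≤ d n := by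
      simp only [hd, Nat.pos_iff_ne_zero.mp hn, if_false]; exact le_max_right _ _
    have h2 : (n : ℝ) * Real.log ε = Real.log (ε ^ n) := by rw [Real.log_pow]
    have h3 : Real.log (ε ^ n) ≤ u n := Real.log_le_log (pow_pos hε n) h1
    rw [le_div_iff₀ (by exact_mod_cast hn : (0:ℝ) < n), mul_comm]
    linarith
  have hlim := husub.tendsto_lim hbdd
  -- the dominating sequence
  set v : ℕ → ℝ := fun n => Real.exp ((Real.log 3 + u n) / n) with hv
  have hvlim : Tendsto v atTop (𝓝 (Real.exp husub.lim)) := by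
    have h1 : Tendsto (fun n : ℕ => Real.log 3 / n) atTop (𝓝 0) :=
      Tendsto.div_atTop tendsto_const_nhds tendsto_natCast_atTop_atTop
    have h2 : Tendsto (fun n : ℕ => Real.log 3 / n + u n / n) atTop (𝓝 (0 + husub.lim)) :=
      h1.add hlim
    have h3 : ∀ n : ℕ, Real.log 3 / n + u n / n = (Real.log 3 + u n) / n := fun n =>
      (add_div _ _ _).symm
    rw [zero_add] at h2
    simp only [h3] at h2
    exact (Real.continuous_exp.continuousAt.tendsto.comp h2)
  have hsv : ∀ᶠ n : ℕ in atTop, s n ^ ((n : ℝ)⁻¹) ≤ v n := by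
    filter_upwards [eventually_ge_atTop 1] with n hn
    have hnpos : (0:ℝ) < n := by exact_mod_cast hn
    have h1 : s n ≤ 3 * d n := (hs n hn).trans (by nlinarith [hcd n hn])
    have h2 : s n ^ ((n : ℝ)⁻¹) ≤ (3 * d n) ^ ((n : ℝ)⁻¹) :=
      Real.rpow_le_rpow (hs0 n) h1 (by positivity)
    have h3 : (3 * d n) ^ ((n : ℝ)⁻¹) = v n := by
      rw [Real.rpow_def_of_pos (by nlinarith [hdpos n])]
      congr 1
      rw [Real.log_mul (by norm_num) (hdpos n).ne']
      field_simp [hv, hu]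
      rfl
    rw [h3] at h2; exact h2
  have hcob : IsCoboundedUnder (· ≤ ·) atTop (fun n : ℕ => s n ^ ((n : ℝ)⁻¹)) :=
    isCoboundedUnder_le_of_le atTop (x := 0) fun n => Real.rpow_nonneg (hs0 n) _
  have h4 : limsup (fun n : ℕ => (s n) ^ ((n : ℝ)⁻¹)) atTop ≤ limsup v atTop :=
    limsup_le_limsup hsv hcob (hvlim.isBoundedUnder_le)
  have h5 : limsup v atTop = Real.exp husub.lim := hvlim.limsup_eq
  have h6 : husub.lim ≤ u k / k := husub.lim_le_div hbdd (by omega)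
  have h7 : Real.exp (u k / k) = (d k) ^ ((k : ℝ)⁻¹) := by
    rw [Real.rpow_def_of_pos (hdpos k)]
    rw [div_eq_mul_inv, mul_comm]
  have h8 : (d k) ^ ((k : ℝ)⁻¹) ≤ max ((c k) ^ ((k : ℝ)⁻¹)) ε := by
    have hkne : (k:ℝ) ≠ 0 := by positivity
    have : d k = max (c k) (ε ^ k) := by
      simp [hd, Nat.one_le_iff_ne_zero.mp hk]
    rw [this]
    rcases max_cases (c k) (ε ^ k) with ⟨h, _⟩ | ⟨h, _⟩
    · rw [h]; exact le_max_left _ _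
    · rw [h]
      have : (ε ^ k) ^ ((k : ℝ)⁻¹) = ε := by
        rw [← Real.rpow_natCast ε k, ← Real.rpow_mul hε.le,
          mul_inv_cancel₀ hkne, Real.rpow_one]
      rw [this]; exact le_max_right _ _
  calc limsup (fun n : ℕ => (s n) ^ ((n : ℝ)⁻¹)) atTop ≤ Real.exp husub.lim := by
        rw [← h5]; exact h4
    _ ≤ Real.exp (u k / k) := Real.exp_le_exp.mpr h6
    _ ≤ max ((c k) ^ ((k : ℝ)⁻¹)) ε := by rw [h7]; exact h8

lemma submult_pow {c : ℕ → ℝ} (hc0 : ∀ n, 1 ≤ n → 0 ≤ c n)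
    (hsub : ∀ j k, 1 ≤ j → 1 ≤ k → c (j + k) ≤ c j * c k)
    {k l : ℕ} (hk : 1 ≤ k) (hl : 1 ≤ l) : c (k * l) ≤ c k ^ l := by
  induction l with
  | zero => omega
  | succ i ih =>
    rcases Nat.eq_zero_or_pos i with hi | hi
    · simp [hi]
    have h1 : c (k * (i + 1)) ≤ c (k * i) * c k := by
      have : k * (i + 1) = k * i + k := by ring
      rw [this]
      exact hsub _ _ (Nat.mul_pos (by omega) (by omega)) hk
    calc c (k * (i + 1)) ≤ c (k * i) * c k := h1
      _ ≤ c k ^ i * c k := by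
          have := ih hi
          have := hc0 k hk
          nlinarith [hc0 (k * i) (Nat.mul_pos (by omega) (by omega))]
      _ = c k ^ (i + 1) := by ring

lemma rhoE_le_main (J : ClosedIdeal A)
    (hJ : ∀ u ∈ J.carrier, ∀ v ∈ J.carrier, IsCompactOperator (fun x : A => u * x * v))
    {M : Set A} (hM : Bornology.IsBounded M) :
    rhoE (LR M M) ≤ qjsr J M * jsr M := by
  set qf : ℕ → ℝ := fun n => qSetNorm J (M ^ n) with hqf
  set mf : ℕ → ℝ := fun n => setNorm (M ^ n) with hmf
  set c : ℕ → ℝ := fun n => qf n * mf n with hc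
  set s : ℕ → ℝ := fun n => sSup (essNorm '' ((LR M M) ^ n)) with hsdef
  have hq0 : ∀ n, 0 ≤ qf n := fun n => qSetNorm_nonneg J _
  have hm0 : ∀ n, 0 ≤ mf n := fun n => setNorm_nonneg _
  have hc0 : ∀ n, 1 ≤ n → 0 ≤ c n := fun n _ => mul_nonneg (hq0 n) (hm0 n)
  have hqsub : ∀ j k, 1 ≤ j → 1 ≤ k → qf (j + k) ≤ qf j * qf k := by
    intro j k hj hk
    simp only [hqf, pow_add]
    exact qSetNorm_mul_le J (isBoundedPowSet hM hj) (isBoundedPowSet hM hk)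
  have hmsub : ∀ j k, 1 ≤ j → 1 ≤ k → mf (j + k) ≤ mf j * mf k := by
    intro j k hj hk
    simp only [hmf, pow_add]
    exact setNorm_mul_le (isBoundedPowSet hM hj) (isBoundedPowSet hM hk)
  have hcsub : ∀ j k, 1 ≤ j → 1 ≤ k → c (j + k) ≤ c j * c k := by
    intro j k hj hk
    have h1 := hqsub j k hj hk
    have h2 := hmsub j k hj hk
    have := hq0 (j+k); have := hm0 (j+k)
    have := hq0 j; have := hm0 j; have := hq0 k; have := hm0 k
    calc c (j+k) = qf (j+k) * mf (j+k) := rfl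
      _ ≤ (qf j * qf k) * (mf j * mf k) := by nlinarith
      _ = c j * c k := by ring
  have hs0 : ∀ n, 0 ≤ s n :=
    fun n => Real.sSup_nonneg (by rintro x ⟨T, _, rfl⟩; exact essNorm_nonneg T)
  have hsle : ∀ n, 1 ≤ n → s n ≤ 3 * c n := by
    intro n hn
    have h3 : (0:ℝ) ≤ 3 * c n := by nlinarith [hc0 n hn]
    refine Real.sSup_le ?_ h3
    rintro x ⟨T, hT, rfl⟩
    obtain ⟨u, hu, v, hv, rfl⟩ := LR_pow_subset M hn hT
    have hMn := isBoundedPowSet hM hn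
    have key : ∀ ε : ℝ, 0 < ε → essNorm ((Lmul u).comp (Rmul v)) ≤
        (qf n + ε) * (3 * mf n + ε) :=
      fun ε hε => essNorm_key hJ hMn hε hu hv
    have := le_mul_of_forall_eps (hq0 n) (by nlinarith [hm0 n]) key
    calc essNorm ((Lmul u).comp (Rmul v)) ≤ qf n * (3 * mf n) := this
      _ = 3 * c n := by simp only [hc]; ring
  -- step 1 : for each k ≥ 1, rhoE ≤ (c k) ^ (1/k)
  have key1 : ∀ k : ℕ, 1 ≤ k → rhoE (LR M M) ≤ (c k) ^ ((k : ℝ)⁻¹) := by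
    intro k hk
    refine le_of_forall_pos_le_add fun δ hδ => ?_
    have hε0 : 0 < min δ 1 := lt_min hδ one_pos
    have hε1 : min δ 1 ≤ 1 := min_le_right _ _
    have := limsup_root_le_aux hc0 hcsub hs0 hsle hk hε0 hε1
    refine this.trans ?_
    have hck : (0:ℝ) ≤ (c k) ^ ((k : ℝ)⁻¹) := Real.rpow_nonneg (hc0 k hk) _
    rcases max_cases ((c k) ^ ((k : ℝ)⁻¹)) (min δ 1) with ⟨h, _⟩ | ⟨h, _⟩
    · rw [h]; linarith
    · rw [h]
      have : min δ 1 ≤ δ := min_le_left _ _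
      linarith
  -- step 2 : for each k l ≥ 1, rhoE ≤ (qf k)^(1/k) * (mf l)^(1/l)
  have key2 : ∀ k l : ℕ, 1 ≤ k → 1 ≤ l →
      rhoE (LR M M) ≤ (qf k) ^ ((k : ℝ)⁻¹) * (mf l) ^ ((l : ℝ)⁻¹) := by
    intro k l hk hl
    have hK : 1 ≤ k * l := Nat.mul_pos (by omega) (by omega)
    have hKne : ((k * l : ℕ) : ℝ) ≠ 0 := by positivity
    have hkne : (k : ℝ) ≠ 0 := by positivity
    have hlne : (l : ℝ) ≠ 0 := by positivity
    have h1 : rhoE (LR M M) ≤ (c (k * l)) ^ (((k * l : ℕ) : ℝ)⁻¹) := key1 _ hK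
    have h2 : (c (k * l)) ^ (((k * l : ℕ) : ℝ)⁻¹) =
        (qf (k * l)) ^ (((k * l : ℕ) : ℝ)⁻¹) * (mf (k * l)) ^ (((k * l : ℕ) : ℝ)⁻¹) :=
      Real.mul_rpow (hq0 _) (hm0 _)
    have h3 : qf (k * l) ≤ qf k ^ l := submult_pow (fun n _ => hq0 n) hqsub hk hl
    have h4 : mf (k * l) ≤ mf l ^ k := by
      have := submult_pow (fun n _ => hm0 n) hmsub hl hk
      rwa [mul_comm] at this
    have h5 : (qf (k * l)) ^ (((k * l : ℕ) : ℝ)⁻¹) ≤ (qf k) ^ ((k : ℝ)⁻¹) := by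
      calc (qf (k * l)) ^ (((k * l : ℕ) : ℝ)⁻¹) ≤ (qf k ^ l) ^ (((k * l : ℕ) : ℝ)⁻¹) :=
            Real.rpow_le_rpow (hq0 _) h3 (by positivity)
        _ = (qf k) ^ ((l : ℝ) * ((k * l : ℕ) : ℝ)⁻¹) := by
            rw [← Real.rpow_natCast (qf k) l, ← Real.rpow_mul (hq0 k)]
        _ = (qf k) ^ ((k : ℝ)⁻¹) := by
            congr 1
            push_cast
            field_simp
    have h6 : (mf (k * l)) ^ (((k * l : ℕ) : ℝ)⁻¹) ≤ (mf l) ^ ((l : ℝ)⁻¹) := by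
      calc (mf (k * l)) ^ (((k * l : ℕ) : ℝ)⁻¹) ≤ (mf l ^ k) ^ (((k * l : ℕ) : ℝ)⁻¹) :=
            Real.rpow_le_rpow (hm0 _) h4 (by positivity)
        _ = (mf l) ^ ((k : ℝ) * ((k * l : ℕ) : ℝ)⁻¹) := by
            rw [← Real.rpow_natCast (mf l) k, ← Real.rpow_mul (hm0 l)]
        _ = (mf l) ^ ((l : ℝ)⁻¹) := by
            congr 1
            push_cast
            field_simp
    calc rhoE (LR M M) ≤ (qf (k * l)) ^ (((k * l : ℕ) : ℝ)⁻¹) *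
          (mf (k * l)) ^ (((k * l : ℕ) : ℝ)⁻¹) := by rw [← h2]; exact h1
      _ ≤ (qf k) ^ ((k : ℝ)⁻¹) * (mf l) ^ ((l : ℝ)⁻¹) :=
          mul_le_mul h5 h6 (Real.rpow_nonneg (hm0 _) _) (Real.rpow_nonneg (hq0 _) _)
  -- step 3 : conclude
  have hα0 : 0 ≤ qjsr J M :=
    Real.iInf_nonneg fun n => Real.rpow_nonneg (hq0 n) _
  have hβ0 : 0 ≤ jsr M :=
    Real.iInf_nonneg fun n => Real.rpow_nonneg (hm0 n) _
  refine le_mul_of_forall_eps hα0 hβ0 fun ε hε => ?_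
  obtain ⟨k, hk⟩ := exists_lt_of_ciInf_lt
    (show qjsr J M < qjsr J M + ε from lt_add_of_pos_right _ hε)
  obtain ⟨l, hl⟩ := exists_lt_of_ciInf_lt
    (show jsr M < jsr M + ε from lt_add_of_pos_right _ hε)
  have hkk : ((k : ℕ+) : ℝ) = ((k : ℕ) : ℝ) := by norm_cast
  have hll : ((l : ℕ+) : ℝ) = ((l : ℕ) : ℝ) := by norm_cast
  have h1 : rhoE (LR M M) ≤ (qf (k : ℕ)) ^ (((k:ℕ) : ℝ)⁻¹) * (mf (l : ℕ)) ^ (((l:ℕ) : ℝ)⁻¹) :=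
    key2 _ _ k.one_le l.one_le
  refine h1.trans (mul_le_mul ?_ ?_ (Real.rpow_nonneg (hm0 _) _)
    (by linarith : (0:ℝ) ≤ qjsr J M + ε))
  · rw [← hkk] at *; exact hk.le
  · rw [← hll] at *; exact hl.le

/-- if `J` is a bicompact closed ideal of a Banach algebra `A`
and `M ⊆ A` is bounded, then for every `ε > 0` and `a, b ∈ M` one has
`‖L_a R_b‖_e ≤ (‖M/J‖ + ε)(3‖M‖ + ε)`; consequently
`‖L_M R_M‖_e ≤ 3 ‖M/J‖ ‖M‖` and `ρ_e(L_M R_M) ≤ ρ(M/J) ρ(M)`. -/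
theorem essNorm_LR_le {A : Type*} [NormedRing A] [NormedAlgebra ℂ A] [CompleteSpace A]
    (J : ClosedIdeal A)
    (hJ : ∀ u ∈ J.carrier, ∀ v ∈ J.carrier, IsCompactOperator (fun x : A => u * x * v))
    (M : Set A) (hM : Bornology.IsBounded M) :
    (∀ ε : ℝ, 0 < ε → ∀ a ∈ M, ∀ b ∈ M,
        essNorm ((Lmul a).comp (Rmul b)) ≤ (qSetNorm J M + ε) * (3 * setNorm M + ε)) ∧
    sSup (essNorm '' LR M M) ≤ 3 * qSetNorm J M * setNorm M ∧
    rhoE (LR M M) ≤ qjsr J M * jsr M := by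
  refine ⟨fun ε hε a ha b hb => essNorm_key hJ hM hε ha hb,
    sSup_essNorm_LR_le J hJ hM, rhoE_le_main J hJ hM⟩
end
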